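/- Let G be a modular noetherian right ℓ-group with strong order unit s, and let g ∈ G⁻ be d-homogeneous with right-normal factorization g = g_k g_{k-1} ⋯ g₁ (all deg(g_i) = d). Then this factorization is also left-normal, i.e., g_{i+1} ∧ s^{-1} g_i^{-1} = s^{-1} for all 1 ≤ i < k. -/

import Mathlib

/-!
Put `A = g ⊔ s^{-i-1}`, `B = g ⊔ s^{-i}`, `C = g ⊔ s^{-i+1}`, so that the claim reads
`A ⊓ s⁻¹C = s⁻¹B` after right multiplication by `B`. Normality of `s` gives `A ⊔ s⁻¹C = B` and
`s⁻¹B ≤ A ⊓ s⁻¹C`. In a noetherian ℓ-group every strict inequality refines to a cover, so the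
degree is strictly antitone; in a modular one a cover `w ⋖ y` lifts to `x ⊔ w ⋖ x ⊔ y`, which
yields the parallelogram identity `deg (x ⊓ y) + deg (x ⊔ y) = deg x + deg y`. Together with
`deg A - deg B = deg B - deg C` (homogeneity) it gives `deg (A ⊓ s⁻¹C) = deg (s⁻¹B)`, and the
inequality is an equality.
-/

/-- An element `s` of a right ℓ-group is normal if left multiplication by `s` preserves
the lattice operations. -/
def IsNormal {G : Type*} [Lattice G] [Group G] (s : G) : Prop :=
  ∀ x y : G, s * (x ⊓ y) = s * x ⊓ s * y ∧ s * (x ⊔ y) = s * x ⊔ s * y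

/-- A strong order unit: a normal element `s > 1` such that every `g` satisfies
`g ≤ sⁿ` for some integer `n`. -/
def IsStrongOrderUnit {G : Type*} [Lattice G] [Group G] (s : G) : Prop :=
  1 < s ∧ IsNormal s ∧ ∀ g : G, ∃ n : ℤ, g ≤ s ^ n

/-- A right ℓ-group is noetherian if every ascending chain bounded above and every
descending chain bounded below stabilizes. -/
def IsLatticeNoetherian (G : Type*) [Lattice G] : Prop :=
  (∀ f : ℕ → G, Monotone f → (∃ h : G, ∀ n, f n ≤ h) → ∃ N, ∀ m, N ≤ m → f m = f N) ∧
  (∀ f : ℕ → G, Antitone f → (∃ h : G, ∀ n, h ≤ f n) → ∃ N, ∀ m, N ≤ m → f m = f N)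

namespace IsLatticeNoetherian

variable {α : Type*} [Lattice α]

theorem wellFoundedGT_Iic (h : IsLatticeNoetherian α) (b : α) : WellFoundedGT (Set.Iic b) := by
  rw [wellFoundedGT_iff_monotone_chain_condition]
  intro f
  obtain ⟨N, hN⟩ := h.1 (fun n => (f n : α)) (fun m n hmn => f.mono hmn) ⟨b, fun n => (f n).2⟩
  exact ⟨N, fun m hm => Subtype.ext (hN m hm).symm⟩

theorem wellFoundedLT_Ici (h : IsLatticeNoetherian α) (a : α) : WellFoundedLT (Set.Ici a) := by
  suffices WellFoundedGT (Set.Ici a)ᵒᵈ from this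
  rw [wellFoundedGT_iff_monotone_chain_condition]
  intro f
  obtain ⟨N, hN⟩ := h.2 (fun n => ((OrderDual.ofDual (f n) : Set.Ici a) : α))
    (fun m n hmn => f.mono hmn) ⟨a, fun n => (OrderDual.ofDual (f n)).2⟩
  exact ⟨N, fun m hm => congrArg OrderDual.toDual (Subtype.ext (hN m hm).symm)⟩

theorem exists_le_covBy (h : IsLatticeNoetherian α) {a b : α} (hab : a < b) :
    ∃ c, a ≤ c ∧ c ⋖ b := by
  have := h.wellFoundedGT_Iic b
  obtain ⟨c, hac, hcb⟩ := exists_le_covBy_of_lt (show (⟨a, hab.le⟩ : Set.Iic b) < ⊤ from hab)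
  exact ⟨c, hac, Set.Iic.isCoatom_iff.1 (covBy_top_iff.1 hcb)⟩

theorem induction_Ici (h : IsLatticeNoetherian α) {a : α} {P : ∀ b, a ≤ b → Prop}
    (ih : ∀ b (hb : a ≤ b), (∀ c (hc : a ≤ c), c < b → P c hc) → P b hb) (b : α) (hab : a ≤ b) :
    P b hab := by
  have := h.wellFoundedLT_Ici a
  suffices ∀ x : Set.Ici a, P x x.2 from this ⟨b, hab⟩
  intro x
  induction x using WellFoundedLT.induction with
  | _ x hx => exact ih x x.2 fun c hac hcx => hx ⟨c, hac⟩ hcx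

end IsLatticeNoetherian

structure IsDegreeHom {G : Type*} [Lattice G] [Group G] (deg : G → ℤ) : Prop where
  map_mul : ∀ a b : G, deg (a * b) = deg a + deg b
  eq_one_of_covBy_one : ∀ x : G, x ⋖ 1 → deg x = 1

namespace IsDegreeHom

variable {G : Type*} [Lattice G] [Group G] {deg : G → ℤ}

theorem map_mul_inv (hd : IsDegreeHom deg) (a b : G) : deg (a * b⁻¹) = deg a - deg b := by
  have := hd.map_mul (a * b⁻¹) b
  rw [inv_mul_cancel_right] at this
  omega

variable [MulRightMono G]

theorem eq_add_one_of_covBy (hd : IsDegreeHom deg) {a b : G} (h : a ⋖ b) :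
    deg a = deg b + 1 := by
  have hcov : a * b⁻¹ ⋖ 1 := by
    simpa using (apply_covBy_apply_iff (OrderIso.mulRight b⁻¹)).2 h
  have := hd.eq_one_of_covBy_one _ hcov
  rw [hd.map_mul_inv] at this
  omega

theorem strictAnti (hd : IsDegreeHom deg) (hG : IsLatticeNoetherian G) : StrictAnti deg := by
  intro a b hab
  induction b, hab.le using hG.induction_Ici with
  | ih b _ ih =>
    obtain ⟨c, hac, hcb⟩ := hG.exists_le_covBy hab
    have hc := hd.eq_add_one_of_covBy hcb
    rcases hac.eq_or_lt with rfl | hac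
    · omega
    · have := ih c hac.le hcb.lt hac
      omega

theorem eq_of_le_of_deg_eq (hd : IsDegreeHom deg) (hG : IsLatticeNoetherian G) {a b : G}
    (hab : a ≤ b) (h : deg a = deg b) : a = b :=
  eq_of_le_of_not_lt hab fun hlt => (hd.strictAnti hG hlt).ne h.symm

theorem inf_add_sup [IsModularLattice G] (hd : IsDegreeHom deg) (hG : IsLatticeNoetherian G)
    (x y : G) : deg (x ⊓ y) + deg (x ⊔ y) = deg x + deg y := by
  suffices ∀ c p, c ≤ p → x ⊓ p = c → deg c + deg (x ⊔ p) = deg x + deg p from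
    this _ y inf_le_right rfl
  intro c p hcp
  induction p, hcp using hG.induction_Ici with
  | ih p hcp ih =>
    intro hxp
    have hcx : c ≤ x := hxp ▸ inf_le_left
    rcases hcp.eq_or_lt with rfl | hlt
    · rw [sup_eq_left.2 hcx]
      ring
    obtain ⟨w, hcw, hwp⟩ := hG.exists_le_covBy hlt
    have hxw : x ⊓ w = c := le_antisymm (hxp ▸ inf_le_inf_left x hwp.le) (le_inf hcx hcw)
    have hpw : p ⊓ (x ⊔ w) = w := by
      rw [inf_comm, sup_comm, sup_inf_assoc_of_le x hwp.le, hxp, sup_eq_left.2 hcw]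
    have hsup : x ⊔ w ⋖ x ⊔ p := by
      have := covBy_sup_of_inf_covBy_left (a := p) (b := x ⊔ w) (by rwa [hpw])
      rwa [sup_comm p, sup_assoc, sup_eq_right.2 hwp.le] at this
    have := ih w hcw hwp.lt hxw
    have := hd.eq_add_one_of_covBy hwp
    have := hd.eq_add_one_of_covBy hsup
    omega

end IsDegreeHom

theorem IsNormal.inv {G : Type*} [Lattice G] [Group G] {s : G} (hs : IsNormal s) :
    IsNormal s⁻¹ := fun x y => by
  obtain ⟨hinf, hsup⟩ := hs (s⁻¹ * x) (s⁻¹ * y)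
  simp only [mul_inv_cancel_left] at hinf hsup
  exact ⟨by rw [← hinf, inv_mul_cancel_left], by rw [← hsup, inv_mul_cancel_left]⟩

theorem IsDegreeHom.leftNormal_of_deg_eq {G : Type*} [Lattice G] [Group G] [MulRightMono G]
    [IsModularLattice G] {deg : G → ℤ} (hd : IsDegreeHom deg) (hG : IsLatticeNoetherian G)
    {s : G} (hs1 : 1 ≤ s) (hs : IsNormal s) (g t : G)
    (h : deg ((g ⊔ s⁻¹ * t) * (g ⊔ t)⁻¹) = deg ((g ⊔ t) * (g ⊔ s * t)⁻¹)) :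
    (g ⊔ s⁻¹ * t) * (g ⊔ t)⁻¹ ⊓ s⁻¹ * ((g ⊔ t) * (g ⊔ s * t)⁻¹)⁻¹ = s⁻¹ := by
  set A := g ⊔ s⁻¹ * t
  set B := g ⊔ t
  set C := g ⊔ s * t
  have hle : ∀ x : G, s⁻¹ * x ≤ x := fun x => by
    simpa using mul_le_mul_left (Right.inv_le_one_iff.2 hs1) x
  have hB : s⁻¹ * B = s⁻¹ * g ⊔ s⁻¹ * t := (hs.inv g t).2
  have hC : s⁻¹ * C = s⁻¹ * g ⊔ t := by rw [(hs.inv g (s * t)).2, inv_mul_cancel_left]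
  have hsup : A ⊔ s⁻¹ * C = B := by
    rw [hC, sup_sup_sup_comm, sup_eq_left.2 (hle g), sup_eq_right.2 (hle t)]
  have hinf : s⁻¹ * B ≤ A ⊓ s⁻¹ * C := by
    rw [hB, hC]
    exact le_inf (sup_le_sup_right (hle g) _) (sup_le_sup_left (hle t) _)
  have hpar := hd.inf_add_sup hG A (s⁻¹ * C)
  rw [hsup, hd.map_mul] at hpar
  rw [hd.map_mul_inv, hd.map_mul_inv] at h
  have hkey : s⁻¹ * B = A ⊓ s⁻¹ * C :=
    hd.eq_of_le_of_deg_eq hG hinf (by rw [hd.map_mul]; omega)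
  rw [mul_inv_rev, inv_inv, ← mul_assoc, ← inf_mul, ← hkey, mul_inv_cancel_right]

theorem homogeneous_rightnormal_implies_leftnormal_general {G : Type*} [Lattice G] [Group G]
    [CovariantClass G G (Function.swap (· * ·)) (· ≤ ·)] [IsModularLattice G]
    (hG : IsLatticeNoetherian G) (s : G) (hs : IsStrongOrderUnit s)
    (deg : G → ℤ) (hdeg : ∀ a b : G, deg (a * b) = deg a + deg b)
    (hatom : ∀ x : G, x ⋖ 1 → deg x = 1)
    (g : G)
    (k : ℕ)
    (dd : ℤ)
    (hhom : ∀ i : ℕ, 1 ≤ i → i ≤ k →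
      deg ((g ⊔ s ^ (-(i : ℤ))) * (g ⊔ s ^ (-(i : ℤ) + 1))⁻¹) = dd) :
    ∀ i : ℕ, 1 ≤ i → i < k →
      (g ⊔ s ^ (-(i : ℤ) - 1)) * (g ⊔ s ^ (-(i : ℤ)))⁻¹ ⊓
        s⁻¹ * ((g ⊔ s ^ (-(i : ℤ))) * (g ⊔ s ^ (-(i : ℤ) + 1))⁻¹)⁻¹ = s⁻¹ := by
  intro i hi hik
  have hdown : s⁻¹ * s ^ (-(i : ℤ)) = s ^ (-(i : ℤ) - 1) := by
    rw [← zpow_neg_one, ← zpow_add, neg_add_eq_sub]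
  have hup : s * s ^ (-(i : ℤ)) = s ^ (-(i : ℤ) + 1) := by
    rw [← zpow_one_add, add_comm]
  have hnext := hhom (i + 1) (by omega) hik
  rw [Nat.cast_succ, neg_add, ← sub_eq_add_neg, sub_add_cancel] at hnext
  have := (IsDegreeHom.mk hdeg hatom).leftNormal_of_deg_eq hG hs.1.le hs.2.1 g (s ^ (-(i : ℤ)))
    (by rw [hdown, hup, hnext, hhom i hi hik.le])
  rwa [hdown, hup] at this

/-- In a modular noetherian right ℓ-group with strong order unit `s`, if `g ≤ 1` is
`d`-homogeneous (all right-normal factors `g_i = (g ⊔ s^{-i})(g ⊔ s^{-(i-1)})⁻¹` have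
degree `d`), then the right-normal factorization is also left-normal:
`g_{i+1} ⊓ s⁻¹ g_i⁻¹ = s⁻¹` for `1 ≤ i < k`. -/
theorem homogeneous_rightnormal_implies_leftnormal {G : Type*} [Lattice G] [Group G]
    [CovariantClass G G (Function.swap (· * ·)) (· ≤ ·)] [IsModularLattice G]
    (hG : IsLatticeNoetherian G) (s : G) (hs : IsStrongOrderUnit s)
    (deg : G → ℤ) (hdeg : ∀ a b : G, deg (a * b) = deg a + deg b)
    (hatom : ∀ x : G, x ⋖ 1 → deg x = 1)
    (g : G) (hg : g ≤ 1)
    (k : ℕ) (hk : s ^ (-(k : ℤ)) ≤ g) (hkmin : ∀ j : ℕ, j < k → ¬ s ^ (-(j : ℤ)) ≤ g)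
    (dd : ℤ)
    (hhom : ∀ i : ℕ, 1 ≤ i → i ≤ k →
      deg ((g ⊔ s ^ (-(i : ℤ))) * (g ⊔ s ^ (-(i : ℤ) + 1))⁻¹) = dd) :
    ∀ i : ℕ, 1 ≤ i → i < k →
      (g ⊔ s ^ (-(i : ℤ) - 1)) * (g ⊔ s ^ (-(i : ℤ)))⁻¹ ⊓
        s⁻¹ * ((g ⊔ s ^ (-(i : ℤ))) * (g ⊔ s ^ (-(i : ℤ) + 1))⁻¹)⁻¹ = s⁻¹ :=
  homogeneous_rightnormal_implies_leftnormal_general hG s hs deg hdeg hatom g k dd hhom
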